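/- For finite probability spaces X, Y and independent products X^n, Y^n, the sequence a_n := ikd(X^n, Y^n) is subadditive: a_{m+n} ≤ a_m + a_n. Consequently the limit lim_{n→∞} ikd(X^n, Y^n)/n exists and equals inf_n ikd(X^n, Y^n)/n. -/

import Mathlib

/-! The coupling `K₁ ⊗ K₂` of `p₁ ⊗ p₂` and `q₁ ⊗ q₂` has entropy `H(K₁) + H(K₂)`, while the
marginals' entropies are additive as well, so `kd(K₁ ⊗ K₂) = kd(K₁) + kd(K₂)`. Since
`Xᵐ⁺ⁿ ≅ Xᵐ × Xⁿ` and `ikd` is invariant under relabelling, taking infima gives subadditivity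
of `n ↦ ikd(Xⁿ, Yⁿ)`; this sequence is nonnegative, so Fekete's lemma applies. -/

open scoped BigOperators
open Filter

noncomputable def shannonEntropy {α : Type*} [Fintype α] (p : α → ℝ) : ℝ :=
  -∑ a, p a * Real.log (p a)

def IsProb {α : Type*} [Fintype α] (p : α → ℝ) : Prop :=
  (∀ a, 0 ≤ p a) ∧ ∑ a, p a = 1

def IsCoupling {α β : Type*} [Fintype α] [Fintype β]
    (p : α → ℝ) (q : β → ℝ) (K : α × β → ℝ) : Prop :=
  IsProb K ∧ (∀ a, ∑ b, K (a, b) = p a) ∧ (∀ b, ∑ a, K (a, b) = q b)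

noncomputable def kd {α β : Type*} [Fintype α] [Fintype β]
    (p : α → ℝ) (q : β → ℝ) (K : α × β → ℝ) : ℝ :=
  (shannonEntropy K - shannonEntropy p) + (shannonEntropy K - shannonEntropy q)

noncomputable def ikd {α β : Type*} [Fintype α] [Fintype β]
    (p : α → ℝ) (q : β → ℝ) : ℝ :=
  sInf { d : ℝ | ∃ K : α × β → ℝ, IsCoupling p q K ∧ d = kd p q K }

/-- The `n`-fold independent product of a distribution. -/
noncomputable def powDist {α : Type*} (p : α → ℝ) (n : ℕ) : (Fin n → α) → ℝ :=
  fun f => ∏ i, p (f i)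

section Entropy

variable {α β : Type*}

def prodDist (p : α → ℝ) (q : β → ℝ) : α × β → ℝ := fun x => p x.1 * q x.2

variable [Fintype α] [Fintype β]

lemma sum_prodDist (p : α → ℝ) (q : β → ℝ) :
    ∑ x, prodDist p q x = (∑ a, p a) * ∑ b, q b := by
  rw [Fintype.sum_mul_sum, Fintype.sum_prod_type]
  rfl

lemma IsProb.prodDist {p : α → ℝ} {q : β → ℝ} (hp : IsProb p) (hq : IsProb q) :
    IsProb (prodDist p q) :=
  ⟨fun x => mul_nonneg (hp.1 _) (hq.1 _), by rw [sum_prodDist, hp.2, hq.2, mul_one]⟩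

lemma IsProb.powDist {p : α → ℝ} (hp : IsProb p) (n : ℕ) : IsProb (powDist p n) := by
  classical
  refine ⟨fun f => Finset.prod_nonneg fun i _ => hp.1 (f i), ?_⟩
  simp only [_root_.powDist, ← Fintype.prod_sum (fun (_ : Fin n) a => p a), hp.2,
    Finset.prod_const_one]

lemma shannonEntropy_comp_equiv (r : α → ℝ) (e : β ≃ α) :
    shannonEntropy (r ∘ e) = shannonEntropy r := by
  simp only [shannonEntropy, Function.comp_apply, Equiv.sum_comp e (fun a => r a * Real.log (r a))]

lemma shannonEntropy_prodDist {p : α → ℝ} {q : β → ℝ} (hp : IsProb p) (hq : IsProb q) :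
    shannonEntropy (prodDist p q) = shannonEntropy p + shannonEntropy q := by
  have hlog : ∀ x : α × β, prodDist p q x * Real.log (prodDist p q x)
      = prodDist (fun a => p a * Real.log (p a)) q x
        + prodDist p (fun b => q b * Real.log (q b)) x := by
    rintro ⟨a, b⟩
    simp only [prodDist]
    rcases eq_or_ne (p a) 0 with ha | ha
    · simp [ha]
    rcases eq_or_ne (q b) 0 with hb | hb
    · simp [hb]
    rw [Real.log_mul ha hb]
    ring
  simp only [shannonEntropy, Fintype.sum_congr _ _ hlog, Finset.sum_add_distrib, sum_prodDist,
    hp.2, hq.2, mul_one, one_mul, neg_add]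

/-- Since `K (a, b) ≤ p a`, each term `-K log K` dominates `-K log p a`. -/
lemma shannonEntropy_le_of_marginal {p : α → ℝ} {K : α × β → ℝ} (hK : ∀ x, 0 ≤ K x)
    (hp : ∀ a, ∑ b, K (a, b) = p a) : shannonEntropy p ≤ shannonEntropy K := by
  have hKp : ∀ x : α × β, K x ≤ p x.1 := fun x => by
    rw [← hp]
    exact Finset.single_le_sum (f := fun b => K (x.1, b)) (fun b _ => hK _) (Finset.mem_univ _)
  rw [shannonEntropy, shannonEntropy, neg_le_neg_iff]
  calc ∑ x, K x * Real.log (K x)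
      ≤ ∑ x : α × β, K x * Real.log (p x.1) := by
        refine Finset.sum_le_sum fun x _ => ?_
        rcases (hK x).eq_or_lt with h | h
        · simp [← h]
        · exact mul_le_mul_of_nonneg_left (Real.log_le_log h (hKp x)) h.le
    _ = ∑ a, p a * Real.log (p a) := by
        simp only [Fintype.sum_prod_type, ← Finset.sum_mul, hp]

end Entropy

section Coupling

variable {α β : Type*} [Fintype α] [Fintype β] {p : α → ℝ} {q : β → ℝ} {K : α × β → ℝ}

def couplingKds (p : α → ℝ) (q : β → ℝ) : Set ℝ :=
  {d | ∃ K : α × β → ℝ, IsCoupling p q K ∧ d = kd p q K}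

lemma ikd_eq_sInf_couplingKds (p : α → ℝ) (q : β → ℝ) : ikd p q = sInf (couplingKds p q) := rfl

lemma IsCoupling.isProb_left (h : IsCoupling p q K) : IsProb p := by
  refine ⟨fun a => ?_, ?_⟩
  · rw [← h.2.1 a]
    exact Finset.sum_nonneg fun b _ => h.1.1 _
  · rw [← h.1.2, Fintype.sum_prod_type]
    simp only [h.2.1]

lemma IsCoupling.swap (h : IsCoupling p q K) : IsCoupling q p (K ∘ Prod.swap) :=
  ⟨⟨fun x => h.1.1 _, by rw [← h.1.2]; exact Equiv.sum_comp (Equiv.prodComm β α) K⟩,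
    h.2.2, h.2.1⟩

lemma IsCoupling.isProb_right (h : IsCoupling p q K) : IsProb q :=
  h.swap.isProb_left

lemma IsCoupling.kd_nonneg (h : IsCoupling p q K) : 0 ≤ kd p q K := by
  have hp := shannonEntropy_le_of_marginal h.1.1 h.2.1
  have hq := shannonEntropy_le_of_marginal h.swap.1.1 h.swap.2.1
  have hswap : shannonEntropy (K ∘ Prod.swap) = shannonEntropy K :=
    shannonEntropy_comp_equiv K (Equiv.prodComm β α)
  rw [hswap] at hq
  unfold kd
  linarith

lemma couplingKds_bddBelow (p : α → ℝ) (q : β → ℝ) : BddBelow (couplingKds p q) :=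
  ⟨0, by rintro _ ⟨K, hK, rfl⟩; exact hK.kd_nonneg⟩

lemma couplingKds_nonempty (hp : IsProb p) (hq : IsProb q) : (couplingKds p q).Nonempty := by
  refine ⟨_, prodDist p q, ⟨hp.prodDist hq, fun a => ?_, fun b => ?_⟩, rfl⟩
  · simp only [prodDist, ← Finset.mul_sum, hq.2, mul_one]
  · simp only [prodDist, ← Finset.sum_mul, hp.2, one_mul]

lemma ikd_nonneg (p : α → ℝ) (q : β → ℝ) : 0 ≤ ikd p q :=
  Real.sInf_nonneg <| by rintro _ ⟨K, hK, rfl⟩; exact hK.kd_nonneg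

end Coupling

section Relabel

variable {α β α' β' : Type*} [Fintype α] [Fintype β] [Fintype α'] [Fintype β']

lemma IsCoupling.comp_prodMap {p : α → ℝ} {q : β → ℝ} {K : α × β → ℝ} (h : IsCoupling p q K)
    (e : α' ≃ α) (f : β' ≃ β) : IsCoupling (p ∘ e) (q ∘ f) (K ∘ Prod.map e f) := by
  refine ⟨⟨fun x => h.1.1 _, ?_⟩, fun a => ?_, fun b => ?_⟩
  · rw [← h.1.2]
    exact Equiv.sum_comp (e.prodCongr f) K
  · rw [Function.comp_apply, ← h.2.1]
    exact Equiv.sum_comp f (fun b => K (e a, b))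
  · rw [Function.comp_apply, ← h.2.2]
    exact Equiv.sum_comp e (fun a => K (a, f b))

lemma kd_comp_prodMap (p : α → ℝ) (q : β → ℝ) (K : α × β → ℝ) (e : α' ≃ α) (f : β' ≃ β) :
    kd (p ∘ e) (q ∘ f) (K ∘ Prod.map e f) = kd p q K := by
  rw [kd, kd, shannonEntropy_comp_equiv p e, shannonEntropy_comp_equiv q f,
    ← Equiv.prodCongr_apply, shannonEntropy_comp_equiv K (e.prodCongr f)]

lemma couplingKds_subset_comp (p : α → ℝ) (q : β → ℝ) (e : α' ≃ α) (f : β' ≃ β) :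
    couplingKds p q ⊆ couplingKds (p ∘ e) (q ∘ f) := by
  rintro _ ⟨K, hK, rfl⟩
  exact ⟨_, hK.comp_prodMap e f, (kd_comp_prodMap p q K e f).symm⟩

lemma ikd_comp_equiv (p : α → ℝ) (q : β → ℝ) (e : α' ≃ α) (f : β' ≃ β) :
    ikd (p ∘ e) (q ∘ f) = ikd p q := by
  have hback := couplingKds_subset_comp (p ∘ e) (q ∘ f) e.symm f.symm
  rw [Function.comp_assoc, Function.comp_assoc, e.self_comp_symm, f.self_comp_symm,
    Function.comp_id, Function.comp_id] at hback
  rw [ikd_eq_sInf_couplingKds, ikd_eq_sInf_couplingKds,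
    hback.antisymm (couplingKds_subset_comp p q e f)]

end Relabel

section Tensor

variable {α₁ α₂ β₁ β₂ : Type*} {K₁ : α₁ × β₁ → ℝ} {K₂ : α₂ × β₂ → ℝ}

def tensorCoupling (K₁ : α₁ × β₁ → ℝ) (K₂ : α₂ × β₂ → ℝ) : (α₁ × α₂) × (β₁ × β₂) → ℝ :=
  prodDist K₁ K₂ ∘ Equiv.prodProdProdComm α₁ α₂ β₁ β₂

variable [Fintype α₁] [Fintype α₂] [Fintype β₁] [Fintype β₂]
  {p₁ : α₁ → ℝ} {p₂ : α₂ → ℝ} {q₁ : β₁ → ℝ} {q₂ : β₂ → ℝ}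

lemma shannonEntropy_tensorCoupling (h₁ : IsProb K₁) (h₂ : IsProb K₂) :
    shannonEntropy (tensorCoupling K₁ K₂) = shannonEntropy K₁ + shannonEntropy K₂ := by
  rw [tensorCoupling, shannonEntropy_comp_equiv, shannonEntropy_prodDist h₁ h₂]

lemma IsCoupling.tensor (h₁ : IsCoupling p₁ q₁ K₁) (h₂ : IsCoupling p₂ q₂ K₂) :
    IsCoupling (prodDist p₁ p₂) (prodDist q₁ q₂) (tensorCoupling K₁ K₂) := by
  refine ⟨⟨fun x => mul_nonneg (h₁.1.1 _) (h₂.1.1 _), ?_⟩, fun a => ?_, fun b => ?_⟩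
  · exact (Equiv.sum_comp _ (prodDist K₁ K₂)).trans (h₁.1.prodDist h₂.1).2
  · refine (sum_prodDist (fun b => K₁ (a.1, b)) (fun b => K₂ (a.2, b))).trans ?_
    rw [h₁.2.1, h₂.2.1]
    rfl
  · refine (sum_prodDist (fun a => K₁ (a, b.1)) (fun a => K₂ (a, b.2))).trans ?_
    rw [h₁.2.2, h₂.2.2]
    rfl

lemma kd_tensorCoupling (h₁ : IsCoupling p₁ q₁ K₁) (h₂ : IsCoupling p₂ q₂ K₂) :
    kd (prodDist p₁ p₂) (prodDist q₁ q₂) (tensorCoupling K₁ K₂)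
      = kd p₁ q₁ K₁ + kd p₂ q₂ K₂ := by
  rw [kd, kd, kd, shannonEntropy_tensorCoupling h₁.1 h₂.1,
    shannonEntropy_prodDist h₁.isProb_left h₂.isProb_left,
    shannonEntropy_prodDist h₁.isProb_right h₂.isProb_right]
  ring

lemma ikd_prodDist_le (hp₁ : IsProb p₁) (hq₁ : IsProb q₁) (hp₂ : IsProb p₂) (hq₂ : IsProb q₂) :
    ikd (prodDist p₁ p₂) (prodDist q₁ q₂) ≤ ikd p₁ q₁ + ikd p₂ q₂ := by
  have hne₁ := couplingKds_nonempty hp₁ hq₁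
  have hne₂ := couplingKds_nonempty hp₂ hq₂
  rw [ikd_eq_sInf_couplingKds, ikd_eq_sInf_couplingKds, ikd_eq_sInf_couplingKds,
    ← csInf_add hne₁ (couplingKds_bddBelow _ _) hne₂ (couplingKds_bddBelow _ _)]
  refine csInf_le_csInf (couplingKds_bddBelow _ _) (hne₁.add hne₂) ?_
  rintro _ ⟨_, ⟨K₁, h₁, rfl⟩, _, ⟨K₂, h₂, rfl⟩, rfl⟩
  exact ⟨_, h₁.tensor h₂, (kd_tensorCoupling h₁ h₂).symm⟩

end Tensor

lemma powDist_comp_appendEquiv {α : Type*} (p : α → ℝ) (m n : ℕ) :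
    powDist p (m + n) ∘ Fin.appendEquiv m n = prodDist (powDist p m) (powDist p n) := by
  ext x
  simp [powDist, prodDist, Fin.prod_univ_add]

lemma ikd_powDist_add_le {X Y : Type*} [Fintype X] [Fintype Y] {p : X → ℝ} {q : Y → ℝ}
    (hp : IsProb p) (hq : IsProb q) (m n : ℕ) :
    ikd (powDist p (m + n)) (powDist q (m + n))
      ≤ ikd (powDist p m) (powDist q m) + ikd (powDist p n) (powDist q n) := by
  rw [← ikd_comp_equiv _ _ (Fin.appendEquiv m n) (Fin.appendEquiv m n),
    powDist_comp_appendEquiv, powDist_comp_appendEquiv]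
  exact ikd_prodDist_le (hp.powDist m) (hq.powDist m) (hp.powDist n) (hq.powDist n)

lemma Subadditive.tendsto_iInf_pnat {u : ℕ → ℝ} (h : Subadditive u)
    (hbdd : BddBelow (Set.range fun n => u n / n)) :
    Tendsto (fun n => u n / n) atTop (nhds (⨅ n : ℕ+, u n / (n : ℝ))) := by
  have hpnat : Set.range PNat.val = Set.Ici 1 := by
    ext n
    exact ⟨fun ⟨k, hk⟩ => hk ▸ k.2, fun hn => ⟨⟨n, hn⟩, rfl⟩⟩
  convert h.tendsto_lim hbdd using 2
  rw [Subadditive.lim, ← sInf_range, ← hpnat, ← Set.range_comp]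
  rfl

/-- The sequence `a n = ikd(Xⁿ, Yⁿ)` is subadditive, hence `a n / n` converges
to its infimum (Fekete's lemma). -/
theorem stmt_5 {X Y : Type*} [Fintype X] [Fintype Y]
    (p : X → ℝ) (q : Y → ℝ) (hp : IsProb p) (hq : IsProb q) :
    let a : ℕ → ℝ := fun n => ikd (powDist p n) (powDist q n)
    (∀ m n : ℕ, 1 ≤ m → 1 ≤ n → a (m + n) ≤ a m + a n) ∧
      Tendsto (fun n : ℕ => a n / n) atTop
        (nhds (⨅ n : ℕ+, a n / (n : ℝ))) := by
  intro a
  have hsub : Subadditive a := ikd_powDist_add_le hp hq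
  refine ⟨fun m n _ _ => hsub m n, hsub.tendsto_iInf_pnat ⟨0, ?_⟩⟩
  rintro _ ⟨n, rfl⟩
  exact div_nonneg (ikd_nonneg _ _) n.cast_nonneg
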